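/- Let G be an unsorted unsigned linear genome containing both edges {0,1} and {1,2}. Then pdcj(G) > b(G), i.e., the prefix DCJ distance strictly exceeds the number of breakpoints. -/

import Mathlib

open Classical

/-- The (multiset of) edges of the path visiting the vertices of `l` in order. -/
def pathEdges (l : List ℕ) : Multiset (Sym2 ℕ) :=
  ↑((l.zip l.tail).map fun p => s(p.1, p.2))

/-- `G` is a linear genome on {0,…,n+1}: a Hamiltonian path on {0,…,n+1}
with endpoints 0 and n+1 (genomes are multisets of edges). -/
def IsLinearGenome (n : ℕ) (G : Multiset (Sym2 ℕ)) : Prop :=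
  ∃ l : List ℕ, l.Perm (List.range (n+2)) ∧ l.head? = some 0 ∧
    l.getLast? = some (n+1) ∧ G = pathEdges l

/-- The identity genome 0−1−⋯−(n+1). -/
def identityGenome (n : ℕ) : Multiset (Sym2 ℕ) := pathEdges (List.range (n+2))

/-- `e` is a breakpoint of `G`: 0 ∉ e, and either its endpoints are not
consecutive integers or it has multiplicity at least two in `G`. -/
def IsBp (G : Multiset (Sym2 ℕ)) (e : Sym2 ℕ) : Prop :=
  (∀ x ∈ e, x ≠ 0) ∧ (¬ (∃ u, e = s(u, u+1)) ∨ 2 ≤ G.count e)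

/-- The number of breakpoints of `G` (counted with multiplicity). -/
noncomputable def bp (G : Multiset (Sym2 ℕ)) : ℕ :=
  (G.filter fun e => IsBp G e).card

/-- Prefix DCJ: cut the edge {0,v} containing 0 and another edge {w,x},
and rejoin the four severed endpoints in one of the two alternative ways. -/
def PrefixDCJ (G G' : Multiset (Sym2 ℕ)) : Prop :=
  ∃ v w x, s(0, v) ∈ G ∧ s(w, x) ∈ G.erase s(0, v) ∧
    (G' = ((G.erase s(0, v)).erase s(w, x)) + {s(0, w), s(v, x)} ∨
     G' = ((G.erase s(0, v)).erase s(w, x)) + {s(0, x), s(v, w)})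

/-- `reachIn R k a b`: `b` is obtained from `a` by exactly `k` steps of `R`. -/
def reachIn {α : Type*} (R : α → α → Prop) : ℕ → α → α → Prop
  | 0, a, b => a = b
  | (k+1), a, b => ∃ c, R a c ∧ reachIn R k c b

/-!
Count the distinct breakpoint edges. A prefix DCJ keeps every edge other than the two it cuts, and
the cut edge at 0 is never a breakpoint, so each step destroys at most one of them; the identity has
none. For `G` the first step destroys none: `G` is simple, so its breakpoints are distinct, and the
step must cut {0,1}; if the other cut edge {w,x} was a breakpoint, the new edge {1,x} is a fresh one,
being either not of the form {u,u+1} or a second copy of {1,2}.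
-/

open Finset

lemma exists_adjacent_of_mem_pathEdges {l : List ℕ} {a b : ℕ} (h : s(a, b) ∈ pathEdges l) :
    ∃ (p j : ℕ) (hp : p < l.length) (hj : j < l.length),
      l[p] = a ∧ l[j] = b ∧ (j = p + 1 ∨ p = j + 1) := by
  obtain ⟨⟨c, d⟩, hcd, he⟩ := List.mem_map.mp (Multiset.mem_coe.mp h)
  obtain ⟨i, hi, hcd⟩ := List.mem_iff_getElem.mp hcd
  simp only [List.length_zip, List.length_tail, lt_min_iff] at hi
  simp only [List.getElem_zip, List.getElem_tail, Prod.mk.injEq] at hcd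
  rcases Sym2.eq_iff.mp he with ⟨rfl, rfl⟩ | ⟨rfl, rfl⟩
  · exact ⟨i, i + 1, by omega, by omega, hcd.1, hcd.2, by omega⟩
  · exact ⟨i + 1, i, by omega, by omega, hcd.2, hcd.1, by omega⟩

lemma nodup_pathEdges {l : List ℕ} (hl : l.Nodup) : (pathEdges l).Nodup := by
  rw [pathEdges, Multiset.coe_nodup, List.Nodup, List.pairwise_iff_getElem]
  intro i j hi hj hij
  simp only [List.length_map, List.length_zip, List.length_tail, lt_min_iff] at hi hj
  simp only [List.getElem_map, List.getElem_zip, List.getElem_tail, ne_eq, Sym2.eq_iff,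
    hl.getElem_inj_iff]
  omega

lemma eq_of_mem_pathEdges_of_head {l : List ℕ} (hl : l.Nodup) {a b c : ℕ} (ha : l.head? = some a)
    (hb : s(a, b) ∈ pathEdges l) (hc : s(a, c) ∈ pathEdges l) : b = c := by
  obtain ⟨p, j, hp, hj, rfl, rfl, hpj⟩ := exists_adjacent_of_mem_pathEdges hb
  obtain ⟨p', j', hp', hj', hpp', rfl, hpj'⟩ := exists_adjacent_of_mem_pathEdges hc
  have h0 : l[0] = l[p] := by
    rw [List.head?_eq_getElem?, List.getElem?_eq_some_iff] at ha
    exact ha.2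
  have := hl.getElem_inj_iff.mp h0
  have := hl.getElem_inj_iff.mp hpp'
  congr 1
  omega

lemma eq_or_eq_or_eq_of_mem_pathEdges {l : List ℕ} (hl : l.Nodup) {a b c d : ℕ}
    (hb : s(a, b) ∈ pathEdges l) (hc : s(a, c) ∈ pathEdges l) (hd : s(a, d) ∈ pathEdges l) :
    b = c ∨ b = d ∨ c = d := by
  obtain ⟨p, j, hp, hj, rfl, rfl, hpj⟩ := exists_adjacent_of_mem_pathEdges hb
  obtain ⟨p', j', hp', hj', hpp', rfl, hpj'⟩ := exists_adjacent_of_mem_pathEdges hc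
  obtain ⟨p'', j'', hp'', hj'', hpp'', rfl, hpj''⟩ := exists_adjacent_of_mem_pathEdges hd
  have := hl.getElem_inj_iff.mp hpp'
  have := hl.getElem_inj_iff.mp hpp''
  simp only [hl.getElem_inj_iff]
  omega

namespace IsLinearGenome

variable {n : ℕ} {G : Multiset (Sym2 ℕ)}

lemma nodup (hG : IsLinearGenome n G) : G.Nodup := by
  obtain ⟨l, hperm, -, -, rfl⟩ := hG
  exact nodup_pathEdges (hperm.nodup_iff.mpr List.nodup_range)

lemma eq_of_mem_of_mem_zero (hG : IsLinearGenome n G) {b c : ℕ}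
    (hb : s(0, b) ∈ G) (hc : s(0, c) ∈ G) : b = c := by
  obtain ⟨l, hperm, hhead, -, rfl⟩ := hG
  exact eq_of_mem_pathEdges_of_head (hperm.nodup_iff.mpr List.nodup_range) hhead hb hc

lemma eq_or_eq_or_eq_of_mem (hG : IsLinearGenome n G) {a b c d : ℕ}
    (hb : s(a, b) ∈ G) (hc : s(a, c) ∈ G) (hd : s(a, d) ∈ G) : b = c ∨ b = d ∨ c = d := by
  obtain ⟨l, hperm, -, -, rfl⟩ := hG
  exact eq_or_eq_or_eq_of_mem_pathEdges (hperm.nodup_iff.mpr List.nodup_range) hb hc hd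

end IsLinearGenome

lemma IsBp.mono {H H' : Multiset (Sym2 ℕ)} {e : Sym2 ℕ} (h : IsBp H e)
    (hc : H.count e ≤ H'.count e) : IsBp H' e :=
  ⟨h.1, h.2.imp id hc.trans'⟩

lemma IsBp.ne_zero_edge {H : Multiset (Sym2 ℕ)} {e : Sym2 ℕ} (h : IsBp H e) (v : ℕ) :
    e ≠ s(0, v) := by
  rintro rfl
  exact h.1 0 (Sym2.mem_mk_left 0 v) rfl

lemma not_isBp_succ_of_nodup {H : Multiset (Sym2 ℕ)} (hH : H.Nodup) (u : ℕ) :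
    ¬ IsBp H s(u, u + 1) := fun h =>
  h.2.elim (fun h => h ⟨u, rfl⟩) fun h => by
    have := Multiset.nodup_iff_count_le_one.mp hH s(u, u + 1); omega

-- Counted with multiplicity instead, cutting one copy of a doubled edge {u,u+1} could destroy
-- two breakpoints at once.
noncomputable def bpSet (H : Multiset (Sym2 ℕ)) : Finset (Sym2 ℕ) :=
  H.toFinset.filter (IsBp H)

lemma mem_bpSet {H : Multiset (Sym2 ℕ)} {e : Sym2 ℕ} : e ∈ bpSet H ↔ e ∈ H ∧ IsBp H e := by
  simp [bpSet]

lemma mem_bpSet_of_count_le {H H' : Multiset (Sym2 ℕ)} {e : Sym2 ℕ} (he : e ∈ bpSet H)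
    (hc : H.count e ≤ H'.count e) : e ∈ bpSet H' := by
  rw [mem_bpSet] at he ⊢
  exact ⟨Multiset.count_pos.mp ((Multiset.count_pos.mpr he.1).trans_le hc), he.2.mono hc⟩

lemma bp_eq_card_bpSet {H : Multiset (Sym2 ℕ)} (hH : H.Nodup) : bp H = #(bpSet H) := by
  rw [bp, bpSet, ← Multiset.toFinset_filter, Multiset.card_toFinset, (hH.filter _).dedup]

lemma bpSet_identityGenome (n : ℕ) : bpSet (identityGenome n) = ∅ := by
  refine Finset.eq_empty_of_forall_notMem fun e he => ?_
  obtain ⟨hmem, hbp⟩ := mem_bpSet.mp he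
  obtain ⟨⟨a, b⟩, hab, rfl⟩ := List.mem_map.mp (Multiset.mem_coe.mp hmem)
  obtain ⟨i, hi, hab⟩ := List.mem_iff_getElem.mp hab
  simp only [List.length_zip, List.length_tail, List.length_range, lt_min_iff] at hi
  simp only [List.getElem_zip, List.getElem_tail, List.getElem_range, Prod.mk.injEq] at hab
  obtain ⟨rfl, rfl⟩ := hab
  exact not_isBp_succ_of_nodup (nodup_pathEdges List.nodup_range) i hbp

lemma Multiset.count_le_count_erase_erase_add {α : Type*} [DecidableEq α] (G : Multiset α)
    {a b e : α} (c d : α) (ha : e ≠ a) (hb : e ≠ b) :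
    G.count e ≤ ((G.erase a).erase b + {c, d}).count e := by
  rw [Multiset.count_add, Multiset.count_erase_of_ne hb, Multiset.count_erase_of_ne ha]
  exact Nat.le_add_right _ _

lemma Finset.card_le_card_of_subset_insert {α : Type*} [DecidableEq α] {s t : Finset α} {a b : α}
    (hs : s ⊆ insert a t) (hb : b ∈ t) (hbs : b ∉ s) : #s ≤ #t :=
  Nat.le_of_succ_le_succ <| calc #s + 1 = #(insert b s) := (card_insert_of_notMem hbs).symm
    _ ≤ #(insert a t) := card_le_card (insert_subset (mem_insert_of_mem hb) hs)
    _ ≤ #t + 1 := card_insert_le a t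

lemma bpSet_subset_insert_rejoin (G : Multiset (Sym2 ℕ)) (v : ℕ) (f c d : Sym2 ℕ) :
    bpSet G ⊆ insert f (bpSet ((G.erase s(0, v)).erase f + {c, d})) := by
  intro e he
  by_cases hef : e = f
  · exact mem_insert.mpr (Or.inl hef)
  · exact mem_insert_of_mem <| mem_bpSet_of_count_le he <|
      G.count_le_count_erase_erase_add c d ((mem_bpSet.mp he).2.ne_zero_edge v) hef

lemma card_bpSet_le_succ_of_prefixDCJ {H H' : Multiset (Sym2 ℕ)} (h : PrefixDCJ H H') :
    #(bpSet H) ≤ #(bpSet H') + 1 := by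
  obtain ⟨v, w, x, -, -, rfl | rfl⟩ := h <;>
    exact (card_le_card (bpSet_subset_insert_rejoin _ _ _ _ _)).trans (card_insert_le _ _)

lemma card_bpSet_le_of_reachIn {n m : ℕ} {H : Multiset (Sym2 ℕ)}
    (h : reachIn PrefixDCJ m H (identityGenome n)) : #(bpSet H) ≤ m := by
  induction m generalizing H with
  | zero =>
    rw [show H = identityGenome n from h, bpSet_identityGenome, card_empty]
  | succ m ih =>
    obtain ⟨H', hstep, hrest⟩ := h
    exact (card_bpSet_le_succ_of_prefixDCJ hstep).trans (Nat.succ_le_succ (ih hrest))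

lemma card_bpSet_le_rejoin_one {G : Multiset (Sym2 ℕ)} (hG : G.Nodup) (h12 : s(1, 2) ∈ G)
    (h1 : ∀ y, s(1, y) ∈ G → y = 0 ∨ y = 2) (w x : ℕ) :
    #(bpSet G) ≤ #(bpSet ((G.erase s(0, 1)).erase s(w, x) + {s(0, w), s(1, x)})) := by
  have hsub := bpSet_subset_insert_rejoin G 1 s(w, x) s(0, w) s(1, x)
  by_cases hwx : s(w, x) ∈ bpSet G
  swap
  · exact card_le_card ((subset_insert_iff_of_notMem hwx).mp hsub)
  have hx : x ≠ 0 := (mem_bpSet.mp hwx).2.1 x (Sym2.mem_mk_right w x)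
  refine card_le_card_of_subset_insert hsub (b := s(1, x)) (mem_bpSet.mpr ⟨by simp, ?_, ?_⟩) ?_
  · simp [hx]
  · by_cases hx2 : x = 2
    · subst hx2
      have hne : s(1, 2) ≠ s(w, 2) := fun h =>
        not_isBp_succ_of_nodup hG 1 (h ▸ (mem_bpSet.mp hwx).2)
      right
      rw [Multiset.count_add, Multiset.count_erase_of_ne hne,
        Multiset.count_erase_of_ne (by decide), Multiset.count_eq_one_of_mem hG h12]
      simp
    · left
      rintro ⟨u, hu⟩
      rcases Sym2.eq_iff.mp hu with ⟨h, h'⟩ | ⟨h, h'⟩ <;> omega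
  · intro hmem
    obtain ⟨hmem, hbp⟩ := mem_bpSet.mp hmem
    rcases h1 x hmem with rfl | rfl
    · exact hx rfl
    · exact not_isBp_succ_of_nodup hG 1 hbp

lemma card_bpSet_le_of_prefixDCJ_of_mem_one_two {G G' : Multiset (Sym2 ℕ)} (hG : G.Nodup)
    (h0 : ∀ v, s(0, v) ∈ G → v = 1) (h12 : s(1, 2) ∈ G)
    (h1 : ∀ y, s(1, y) ∈ G → y = 0 ∨ y = 2) (h : PrefixDCJ G G') :
    #(bpSet G) ≤ #(bpSet G') := by
  obtain ⟨v, w, x, hv, -, rfl | rfl⟩ := h <;> obtain rfl := h0 v hv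
  · exact card_bpSet_le_rejoin_one hG h12 h1 w x
  · rw [Sym2.eq_swap (a := w)]
    exact card_bpSet_le_rejoin_one hG h12 h1 x w

/-- If an unsorted linear genome contains both {0,1} and {1,2}, then its prefix DCJ
distance strictly exceeds its number of breakpoints. -/
theorem pdcj_gt_breakpoints (n : ℕ) (G : Multiset (Sym2 ℕ)) (k : ℕ)
    (hG : IsLinearGenome n G) (hid : G ≠ identityGenome n)
    (h01 : s(0, 1) ∈ G) (h12 : s(1, 2) ∈ G)
    (h : reachIn PrefixDCJ k G (identityGenome n)) :
    bp G < k := by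
  obtain _ | m := k
  · exact absurd h hid
  obtain ⟨G', hstep, hrest⟩ := h
  have h0 : ∀ v, s(0, v) ∈ G → v = 1 := fun v hv => hG.eq_of_mem_of_mem_zero hv h01
  have h1 : ∀ y, s(1, y) ∈ G → y = 0 ∨ y = 2 := fun y hy => by
    have := hG.eq_or_eq_or_eq_of_mem hy (Sym2.eq_swap ▸ h01) h12
    omega
  calc bp G = #(bpSet G) := bp_eq_card_bpSet hG.nodup
    _ ≤ #(bpSet G') := card_bpSet_le_of_prefixDCJ_of_mem_one_two hG.nodup h0 h12 h1 hstep
    _ ≤ m := card_bpSet_le_of_reachIn hrest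
    _ < m + 1 := m.lt_succ_self
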